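/- arXiv:2509.17713 — 4 statements merged into one kernel-verified Lean document; each statement's English description precedes it below -/
import Mathlib

section
/- Let Λ be a real diagonal M×M matrix with diagonal entries λ_1, …, λ_M all ≥ λ_min > 0, let E be a real symmetric positive semidefinite M×M matrix, and let L be a real N×N matrix whose symmetric part (L + Lᵀ)/2 is negative semidefinite. Then the MN×MN matrix A = −Λ⊗I_N + E⊗L satisfies xᵀ A x ≤ −λ_min ‖x‖² for every x ∈ ℝ^{MN}, where ‖·‖ is the Euclidean norm; in particular the symmetric part of A is negative definite. -/
open Matrix
open scoped Kronecker

private lemma quad_transpose {n : Type*} [Fintype n] (A : Matrix n n ℝ) (x : n → ℝ) :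
    x ⬝ᵥ Aᵀ.mulVec x = x ⬝ᵥ A.mulVec x := by
  rw [mulVec_transpose, dotProduct_mulVec, dotProduct_comm]

private lemma sym_quad {n : Type*} [Fintype n] (A : Matrix n n ℝ) (x : n → ℝ) :
    x ⬝ᵥ (((1 / 2 : ℝ) • (A + Aᵀ)).mulVec x) = x ⬝ᵥ A.mulVec x := by
  rw [smul_mulVec, dotProduct_smul, add_mulVec, dotProduct_add, quad_transpose, smul_eq_mul]
  ring

/-- Let `Λ = diag(λ_1, …, λ_M)` with all `λ_k ≥ λ_min > 0`, let `E` be real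
symmetric positive semidefinite, and let `L` be a real `N×N` matrix whose symmetric part
`(L + Lᵀ)/2` is negative semidefinite. Then `A = −Λ⊗I_N + E⊗L` satisfies
`xᵀ A x ≤ −λ_min ‖x‖²` for all `x`; in particular the symmetric part of `A` is
negative definite. -/
theorem stmt_5 {M N : ℕ} (lam : Fin M → ℝ) (lammin : ℝ) (hmin : 0 < lammin)
    (hlam : ∀ k, lammin ≤ lam k)
    (E : Matrix (Fin M) (Fin M) ℝ) (hE : E.PosSemidef)
    (L : Matrix (Fin N) (Fin N) ℝ)
    (hL : ∀ x : Fin N → ℝ, x ⬝ᵥ (((1 / 2 : ℝ) • (L + Lᵀ)).mulVec x) ≤ 0)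
    (A : Matrix (Fin M × Fin N) (Fin M × Fin N) ℝ)
    (hA : A = -(Matrix.diagonal lam ⊗ₖ (1 : Matrix (Fin N) (Fin N) ℝ)) + E ⊗ₖ L) :
    (∀ x : Fin M × Fin N → ℝ, x ⬝ᵥ A.mulVec x ≤ -lammin * (x ⬝ᵥ x)) ∧
    (∀ x : Fin M × Fin N → ℝ, x ≠ 0 →
        x ⬝ᵥ (((1 / 2 : ℝ) • (A + Aᵀ)).mulVec x) < 0) := by
  -- L itself has nonpositive quadratic form
  have hL' : ∀ x : Fin N → ℝ, x ⬝ᵥ L.mulVec x ≤ 0 := fun x => by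
    have := hL x
    rwa [sym_quad] at this
  -- E = Bᵀ B
  open scoped MatrixOrder in obtain ⟨B, hB⟩ := CStarAlgebra.nonneg_iff_eq_star_mul_self.mp hE.nonneg
  rw [star_eq_conjTranspose, conjTranspose_eq_transpose_of_trivial] at hB
  -- quadratic form of 1 ⊗ₖ L is a sum of block quadratic forms
  have hkron : ∀ z : Fin M × Fin N → ℝ,
      z ⬝ᵥ ((1 : Matrix (Fin M) (Fin M) ℝ) ⊗ₖ L).mulVec z ≤ 0 := by
    intro z
    have : z ⬝ᵥ ((1 : Matrix (Fin M) (Fin M) ℝ) ⊗ₖ L).mulVec z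
        = ∑ m : Fin M, (fun i => z (m, i)) ⬝ᵥ L.mulVec (fun i => z (m, i)) := by
      simp only [dotProduct, mulVec, kronecker_apply, one_apply, Fintype.sum_prod_type]
      refine Finset.sum_congr rfl fun m _ => Finset.sum_congr rfl fun i _ => ?_
      congr 1
      rw [Finset.sum_comm]
      simp [ite_mul, Finset.sum_ite_eq]
    rw [this]
    exact Finset.sum_nonpos fun m _ => hL' _
  -- quadratic form of E ⊗ₖ L is ≤ 0
  have hEL : ∀ x : Fin M × Fin N → ℝ, x ⬝ᵥ (E ⊗ₖ L).mulVec x ≤ 0 := by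
    intro x
    have hfac : E ⊗ₖ L
        = (B ⊗ₖ (1 : Matrix (Fin N) (Fin N) ℝ))ᵀ
          * ((1 : Matrix (Fin M) (Fin M) ℝ) ⊗ₖ L)
          * (B ⊗ₖ (1 : Matrix (Fin N) (Fin N) ℝ)) := by
      have ht : (B ⊗ₖ (1 : Matrix (Fin N) (Fin N) ℝ))ᵀ
          = Bᵀ ⊗ₖ (1 : Matrix (Fin N) (Fin N) ℝ) := by
        rw [← kroneckerMap_transpose, transpose_one]
      rw [ht, ← mul_kronecker_mul, ← mul_kronecker_mul, Matrix.mul_one, Matrix.one_mul, Matrix.mul_one, ← hB]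
    rw [hfac, ← mulVec_mulVec, ← mulVec_mulVec, dotProduct_mulVec, vecMul_transpose]
    exact hkron _
  -- quadratic form of diagonal part
  have hdiag : ∀ x : Fin M × Fin N → ℝ,
      lammin * (x ⬝ᵥ x) ≤ x ⬝ᵥ (Matrix.diagonal lam ⊗ₖ (1 : Matrix (Fin N) (Fin N) ℝ)).mulVec x := by
    intro x
    have h1 : (Matrix.diagonal lam ⊗ₖ (1 : Matrix (Fin N) (Fin N) ℝ))
        = Matrix.diagonal (fun p : Fin M × Fin N => lam p.1) := by
      rw [← Matrix.diagonal_one, diagonal_kronecker_diagonal]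
      simp
    rw [h1]
    simp only [dotProduct, mulVec_diagonal, Finset.mul_sum]
    apply Finset.sum_le_sum
    intro p _
    have : lammin * (x p * x p) ≤ lam p.1 * (x p * x p) :=
      mul_le_mul_of_nonneg_right (hlam p.1) (mul_self_nonneg _)
    nlinarith [this]
  have main : ∀ x : Fin M × Fin N → ℝ, x ⬝ᵥ A.mulVec x ≤ -lammin * (x ⬝ᵥ x) := by
    intro x
    rw [hA, add_mulVec, dotProduct_add, neg_mulVec, dotProduct_neg]
    have := hdiag x
    have := hEL x
    linarith
  refine ⟨main, fun x hx => ?_⟩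
  rw [sym_quad]
  have hxx : 0 < x ⬝ᵥ x := by
    rcases Function.ne_iff.mp hx with ⟨p, hp⟩
    have hp' : x p ≠ 0 := by simpa using hp
    have : 0 < x p * x p := mul_self_pos.mpr hp'
    calc (0:ℝ) < x p * x p := this
    _ ≤ x ⬝ᵥ x := Finset.single_le_sum (f := fun q => x q * x q)
        (fun q _ => mul_self_nonneg _) (Finset.mem_univ p)
  have := main x
  nlinarith
end

section
/- Let A be an n×n complex matrix, and set H₁ = (A + A†)/2 and H₂ = (A − A†)/(2i), where A† is the conjugate transpose, so that A = H₁ + iH₂ with H₁, H₂ Hermitian. Let u : ℝ → ℂⁿ be differentiable with u'(t) = A u(t), and define w(t,p) = e^{−p} u(t) for (t,p) ∈ ℝ². Then w satisfies the convection equation ∂_t w(t,p) = −H₁ ∂_p w(t,p) + i H₂ w(t,p) for all t and p. -/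
open Matrix

lemma aux_decomp {n : ℕ} (A H₁ H₂ : Matrix (Fin n) (Fin n) ℂ)
    (hH₁ : H₁ = (1 / 2 : ℂ) • (A + Aᴴ)) (hH₂ : H₂ = (2 * Complex.I)⁻¹ • (A - Aᴴ)) :
    H₁ + Complex.I • H₂ = A := by
  subst hH₁ hH₂
  rw [smul_smul]
  have h : Complex.I * (2 * Complex.I)⁻¹ = 1 / 2 := by
    rw [mul_inv]
    field_simp [Complex.I_ne_zero]
  rw [h]
  module

/-- Let `A` be an `n×n` complex matrix with Hermitian decomposition
`A = H₁ + iH₂`, `H₁ = (A + A†)/2`, `H₂ = (A − A†)/(2i)`. If `u' = A u` and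
`w(t,p) = e^{−p} u(t)`, then `∂_t w = −H₁ ∂_p w + i H₂ w`. -/
theorem stmt_15 {n : ℕ} (A H₁ H₂ : Matrix (Fin n) (Fin n) ℂ)
    (hH₁ : H₁ = (1 / 2 : ℂ) • (A + Aᴴ)) (hH₂ : H₂ = (2 * Complex.I)⁻¹ • (A - Aᴴ))
    (u : ℝ → Fin n → ℂ) (hu : ∀ t : ℝ, HasDerivAt u (A.mulVec (u t)) t)
    (w : ℝ → ℝ → Fin n → ℂ) (hw : ∀ t p : ℝ, w t p = Real.exp (-p) • u t) :
    ∀ t p : ℝ, ∃ wp : Fin n → ℂ,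
      HasDerivAt (fun q => w t q) wp p ∧
      HasDerivAt (fun s => w s p)
        (-(H₁.mulVec wp) + Complex.I • H₂.mulVec (w t p)) t := by
  intro t p
  have hcoe : ∀ (r : ℝ) (v : Fin n → ℂ), r • v = (r : ℂ) • v := by
    intro r v; funext i; simp [Complex.real_smul]
  refine ⟨(-Real.exp (-p)) • u t, ?_, ?_⟩
  · have hf : HasDerivAt (fun q : ℝ => Real.exp (-q)) (-Real.exp (-p)) p := by
      simpa [Function.comp_def] using (Real.hasDerivAt_exp (-p)).comp p (hasDerivAt_neg p)
    have := hf.smul_const (u t)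
    simpa [hw] using this
  · have hd : HasDerivAt (fun s => w s p) (Real.exp (-p) • A.mulVec (u t)) t := by
      have := (hu t).const_smul (Real.exp (-p))
      simpa [hw, Pi.smul_def] using this
    have key : -(H₁.mulVec ((-Real.exp (-p)) • u t))
        + Complex.I • H₂.mulVec (w t p) = Real.exp (-p) • A.mulVec (u t) := by
      rw [hw, hcoe, hcoe, hcoe]
      rw [show ((-Real.exp (-p) : ℝ) : ℂ) • u t
          = -((Real.exp (-p) : ℂ) • u t) by push_cast; rw [neg_smul]]
      rw [mulVec_neg, mulVec_smul, mulVec_smul, neg_neg, smul_comm Complex.I,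
        ← smul_add]
      congr 1
      rw [← Matrix.smul_mulVec, ← Matrix.add_mulVec,
        aux_decomp A H₁ H₂ hH₁ hH₂]
    rwa [key]
end

section
/- Let Λ = diag(λ_1, …, λ_M) be a real diagonal matrix, let ω ∈ ℝ^M have strictly positive entries, let 𝟙 ∈ ℝ^M be the all-ones vector, let W = ω 𝟙ᵀ, let L be a real N×N matrix, and let f : [0,∞) → ℝ^N be continuous. Suppose Û : [0,∞) → ℝ^{MN} is differentiable and solves Û'(t) = (−Λ⊗I_N + W⊗L) Û(t) + ω ⊗ f(t) with Û(0) = 0. Then U(t) := (D_ω^{-1/2} ⊗ I_N) Û(t), where D_ω = diag(ω), is differentiable and solves U'(t) = (−Λ⊗I_N + E_ω⊗L) U(t) + ω^{1/2} ⊗ f(t) with U(0) = 0, where E_ω = ω^{1/2}(ω^{1/2})ᵀ and ω^{1/2} = (√ω_1, …, √ω_M). -/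
open Matrix
open scoped Kronecker

/-- Let `Λ = diag(λ)`, `ω` with positive entries, `W = ω 𝟙ᵀ`, `L` an `N×N`
matrix, `f` continuous. If `Û` solves `Û' = (−Λ⊗I + W⊗L)Û + ω ⊗ f(t)`, `Û(0) = 0`, then
`U = (D_ω^{-1/2} ⊗ I) Û` solves `U' = (−Λ⊗I + E_ω⊗L)U + ω^{1/2} ⊗ f(t)`, `U(0) = 0`, where
`E_ω = ω^{1/2}(ω^{1/2})ᵀ`. -/
theorem stmt_17 {M N : ℕ} (lam : Fin M → ℝ) (ω : Fin M → ℝ) (hω : ∀ i, 0 < ω i)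
    (L : Matrix (Fin N) (Fin N) ℝ)
    (f : ℝ → Fin N → ℝ) (hf : ContinuousOn f (Set.Ici 0))
    (Uhat : ℝ → Fin M × Fin N → ℝ) (hUhat0 : Uhat 0 = 0)
    (hUhat : ∀ t ∈ Set.Ici (0 : ℝ), HasDerivWithinAt Uhat
      ((-(Matrix.diagonal lam ⊗ₖ (1 : Matrix (Fin N) (Fin N) ℝ)) +
          vecMulVec ω (fun _ => (1 : ℝ)) ⊗ₖ L).mulVec (Uhat t) +
        fun p : Fin M × Fin N => ω p.1 * f t p.2)
      (Set.Ici 0) t)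
    (U : ℝ → Fin M × Fin N → ℝ)
    (hU : ∀ t : ℝ, U t =
      ((Matrix.diagonal fun i => (Real.sqrt (ω i))⁻¹) ⊗ₖ
        (1 : Matrix (Fin N) (Fin N) ℝ)).mulVec (Uhat t)) :
    U 0 = 0 ∧
    ∀ t ∈ Set.Ici (0 : ℝ), HasDerivWithinAt U
      ((-(Matrix.diagonal lam ⊗ₖ (1 : Matrix (Fin N) (Fin N) ℝ)) +
          vecMulVec (fun i => Real.sqrt (ω i)) (fun i => Real.sqrt (ω i)) ⊗ₖ L).mulVec (U t) +
        fun p : Fin M × Fin N => Real.sqrt (ω p.1) * f t p.2)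
      (Set.Ici 0) t := by
  have hs : ∀ i, Real.sqrt (ω i) ≠ 0 := fun i => (Real.sqrt_pos.2 (hω i)).ne'
  set A : Matrix (Fin M × Fin N) (Fin M × Fin N) ℝ :=
    (Matrix.diagonal fun i => (Real.sqrt (ω i))⁻¹) ⊗ₖ (1 : Matrix (Fin N) (Fin N) ℝ) with hA
  set B : Matrix (Fin M × Fin N) (Fin M × Fin N) ℝ :=
    -(Matrix.diagonal lam ⊗ₖ (1 : Matrix (Fin N) (Fin N) ℝ)) +
      vecMulVec ω (fun _ => (1 : ℝ)) ⊗ₖ L with hB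
  set B' : Matrix (Fin M × Fin N) (Fin M × Fin N) ℝ :=
    -(Matrix.diagonal lam ⊗ₖ (1 : Matrix (Fin N) (Fin N) ℝ)) +
      vecMulVec (fun i => Real.sqrt (ω i)) (fun i => Real.sqrt (ω i)) ⊗ₖ L with hB'
  -- key matrix commutation identity
  have hcomm : A * B = B' * A := by
    have h1 : (Matrix.diagonal fun i => (Real.sqrt (ω i))⁻¹) * Matrix.diagonal lam
        = Matrix.diagonal lam * Matrix.diagonal fun i => (Real.sqrt (ω i))⁻¹ := by
      rw [Matrix.diagonal_mul_diagonal, Matrix.diagonal_mul_diagonal]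
      simp [mul_comm]
    have h2 : (Matrix.diagonal fun i => (Real.sqrt (ω i))⁻¹) * vecMulVec ω (fun _ => (1 : ℝ))
        = vecMulVec (fun i => Real.sqrt (ω i)) (fun i => Real.sqrt (ω i)) *
          Matrix.diagonal fun i => (Real.sqrt (ω i))⁻¹ := by
      ext i j
      rw [Matrix.diagonal_mul, Matrix.mul_diagonal, Matrix.vecMulVec_apply,
        Matrix.vecMulVec_apply, mul_inv_cancel_right₀ (hs j)]
      field_simp
      rw [div_eq_iff (hs i), Real.mul_self_sqrt (hω i).le]
    rw [hA, hB, hB', Matrix.mul_add, Matrix.add_mul, Matrix.mul_neg, Matrix.neg_mul,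
      ← Matrix.mul_kronecker_mul, ← Matrix.mul_kronecker_mul, ← Matrix.mul_kronecker_mul,
      ← Matrix.mul_kronecker_mul, h1, h2]
    simp
  -- forcing term identity
  have hforce : ∀ t : ℝ, A.mulVec (fun p : Fin M × Fin N => ω p.1 * f t p.2)
      = fun p : Fin M × Fin N => Real.sqrt (ω p.1) * f t p.2 := by
    intro t
    funext p
    obtain ⟨i, j⟩ := p
    simp only [hA, Matrix.mulVec, dotProduct, Fintype.sum_prod_type,
      Matrix.kroneckerMap_apply, Matrix.diagonal_apply, Matrix.one_apply]
    rw [Finset.sum_eq_single i]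
    · rw [Finset.sum_eq_single j]
      · have key : (Real.sqrt (ω i))⁻¹ * ω i = Real.sqrt (ω i) := by
          rw [inv_mul_eq_div, eq_comm, eq_div_iff (hs i), Real.mul_self_sqrt (hω i).le]
        simp only [if_true, mul_one]
        rw [← mul_assoc, key]
      · intro b _ hb; simp [hb.symm]
      · intro h; exact absurd (Finset.mem_univ j) h
    · intro a _ ha; simp [ha.symm]
    · intro h; exact absurd (Finset.mem_univ i) h
  constructor
  · rw [hU 0, hUhat0, Matrix.mulVec_zero]
  · intro t ht
    have hfun : U = ⇑(Matrix.mulVecLin A).toContinuousLinearMap ∘ Uhat := by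
      funext s; simp [hU s, Function.comp]
    have hd := ((Matrix.mulVecLin A).toContinuousLinearMap.hasFDerivAt
      (x := Uhat t)).comp_hasDerivWithinAt t (hUhat t ht)
    rw [← hfun] at hd
    convert hd using 1
    show _ = A *ᵥ (B *ᵥ Uhat t + fun p : Fin M × Fin N => ω p.1 * f t p.2)
    rw [Matrix.mulVec_add, Matrix.mulVec_mulVec, hcomm, ← Matrix.mulVec_mulVec,
      ← hU t, hforce t]
    all_goals rfl
end

section
/- Let Λ = diag(λ_1, …, λ_M) with all λ_k ≥ λ_min > 0, let ω ∈ ℝ^M have strictly positive entries and E_ω = ω^{1/2}(ω^{1/2})ᵀ where ω^{1/2} = (√ω_1, …, √ω_M), let D_∞ = diag(μ_1, …, μ_N) be a real diagonal matrix with all μ_i < 0, and set A = −Λ⊗I_N + E_ω⊗D_∞. Fix g ∈ ℝ^N and define U(t) = ∫_0^t exp((t−s)A) (ω^{1/2} ⊗ g) ds for t ≥ 0. Then ‖U(t)‖ ≤ (ω_1 + ⋯ + ω_M)^{1/2} ‖g‖ (1 − e^{−λ_min t})/λ_min ≤ (ω_1 + ⋯ + ω_M)^{1/2} ‖g‖ /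 λ_min for all t ≥ 0. -/
open Matrix NormedSpace
open scoped Kronecker RealInnerProductSpace


lemma exp_decay_aux' {E : Type*} [NormedAddCommGroup E] [InnerProductSpace ℝ E]
    [CompleteSpace E] (L : E →L[ℝ] E) (lam : ℝ)
    (hL : ∀ x : E, ⟪L x, x⟫ ≤ -lam * ‖x‖ ^ 2) (x : E) :
    ∀ t : ℝ, 0 ≤ t → ‖exp (t • L) x‖ ≤ Real.exp (-lam * t) * ‖x‖ := by
  intro t ht
  set f : ℝ → E := fun s => exp (s • L) x with hf
  have hderiv : ∀ s : ℝ, HasDerivAt f (L (f s)) s := by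
    intro s
    have h := hasDerivAt_exp_smul_const' (𝕂 := ℝ) L s
    have h2 := h.clm_apply (hasDerivAt_const s x)
    simpa using h2
  set F : ℝ → ℝ := fun s => Real.exp (2 * lam * s) * ⟪f s, f s⟫ with hF
  have hFderiv : ∀ s : ℝ, HasDerivAt F
      (Real.exp (2 * lam * s) * (2 * lam) * ⟪f s, f s⟫ +
        Real.exp (2 * lam * s) * (⟪f s, L (f s)⟫ + ⟪L (f s), f s⟫)) s := by
    intro s
    have h1 : HasDerivAt (fun s : ℝ => Real.exp (2 * lam * s))
        (Real.exp (2 * lam * s) * (2 * lam)) s := by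
      have := Real.hasDerivAt_exp (2 * lam * s)
      have hlin : HasDerivAt (fun s : ℝ => 2 * lam * s) (2 * lam) s := by
        simpa using (hasDerivAt_id s).const_mul (2 * lam)
      simpa using hlin.exp
    have h2 : HasDerivAt (fun s : ℝ => ⟪f s, f s⟫)
        (⟪f s, L (f s)⟫ + ⟪L (f s), f s⟫) s := (hderiv s).inner ℝ (hderiv s)
    exact h1.mul h2
  have hmono : F t ≤ F 0 := by
    have : AntitoneOn F (Set.Icc 0 t) := by
      apply antitoneOn_of_deriv_nonpos (convex_Icc 0 t)
      · exact fun s _ => ((hFderiv s).continuousAt).continuousWithinAt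
      · exact fun s _ => (hFderiv s).differentiableAt.differentiableWithinAt
      · intro s _
        rw [(hFderiv s).deriv]
        have hnorm : ⟪f s, f s⟫ = ‖f s‖ ^ 2 := real_inner_self_eq_norm_sq (f s)
        have hLf := hL (f s)
        have hsym : ⟪f s, L (f s)⟫ = ⟪L (f s), f s⟫ := real_inner_comm _ _
        rw [hsym, hnorm]
        have hexp : (0:ℝ) < Real.exp (2 * lam * s) := Real.exp_pos _
        nlinarith [sq_nonneg (‖f s‖), hexp.le]
    exact this (Set.left_mem_Icc.2 ht) (Set.right_mem_Icc.2 ht) ht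
  have hF0 : F 0 = ‖x‖ ^ 2 := by
    simp [hF, hf, real_inner_self_eq_norm_sq]
  have hFt : F t = Real.exp (2 * lam * t) * ‖f t‖ ^ 2 := by
    rw [hF]; simp [real_inner_self_eq_norm_sq]
  rw [hFt, hF0] at hmono
  have hexp : (0:ℝ) < Real.exp (2 * lam * t) := Real.exp_pos _
  have key : ‖f t‖ ^ 2 ≤ (Real.exp (-lam * t) * ‖x‖) ^ 2 := by
    have h2 : (Real.exp (-lam * t) * ‖x‖) ^ 2
        = (Real.exp (2 * lam * t))⁻¹ * ‖x‖ ^ 2 := by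
      rw [mul_pow, ← Real.exp_nat_mul, ← Real.exp_neg]
      ring_nf
    rw [h2]
    calc ‖f t‖ ^ 2 = (Real.exp (2 * lam * t))⁻¹ * (Real.exp (2 * lam * t) * ‖f t‖ ^ 2) := by
          field_simp
      _ ≤ (Real.exp (2 * lam * t))⁻¹ * ‖x‖ ^ 2 :=
          mul_le_mul_of_nonneg_left hmono (inv_nonneg.2 hexp.le)
  calc ‖f t‖ = Real.sqrt (‖f t‖ ^ 2) := (Real.sqrt_sq (norm_nonneg _)).symm
    _ ≤ Real.sqrt ((Real.exp (-lam * t) * ‖x‖) ^ 2) := Real.sqrt_le_sqrt key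
    _ = Real.exp (-lam * t) * ‖x‖ := Real.sqrt_sq (by positivity)


lemma mulVec_A_eq' {M N : ℕ} (lam : Fin M → ℝ) (ω : Fin M → ℝ) (μ : Fin N → ℝ)
    (A : Matrix (Fin M × Fin N) (Fin M × Fin N) ℝ)
    (hA : A = -(Matrix.diagonal lam ⊗ₖ (1 : Matrix (Fin N) (Fin N) ℝ)) +
      vecMulVec (fun i => Real.sqrt (ω i)) (fun i => Real.sqrt (ω i)) ⊗ₖ Matrix.diagonal μ)
    (y : Fin M × Fin N → ℝ) (p : Fin M × Fin N) :
    A.mulVec y p = -(lam p.1 * y p) +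
      Real.sqrt (ω p.1) * μ p.2 * ∑ k, Real.sqrt (ω k) * y (k, p.2) := by
  obtain ⟨i, j⟩ := p
  subst hA
  simp only [Matrix.mulVec, dotProduct, Fintype.sum_prod_type, Matrix.add_apply,
    Matrix.neg_apply, Matrix.kroneckerMap_apply, Matrix.diagonal_apply, Matrix.one_apply,
    Matrix.vecMulVec_apply, mul_ite, ite_mul, mul_zero, zero_mul, mul_one]
  rw [Finset.sum_comm]
  rw [Finset.sum_eq_single j]
  · rw [Finset.mul_sum]
    simp only [if_pos rfl, add_mul, neg_mul, ite_mul, zero_mul, Finset.sum_add_distrib,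
      Finset.sum_neg_distrib, if_true]
    congr 1
    · congr 1
      rw [Finset.sum_ite_eq Finset.univ i fun x => lam i * y (x, j)]
      simp
    · congr 1; funext k; ring
  · intro b _ hb
    have : ¬ (j = b) := fun h => hb h.symm
    simp [this]
  · simp

lemma integral_exp_aux (lam t : ℝ) (hlam : lam ≠ 0) :
    ∫ s in (0:ℝ)..t, Real.exp (-lam * (t - s)) = (1 - Real.exp (-lam * t)) / lam := by
  have hd : ∀ s ∈ Set.uIcc (0:ℝ) t,
      HasDerivAt (fun s => Real.exp (-lam * (t - s)) / lam) (Real.exp (-lam * (t - s))) s := by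
    intro s _
    have h1 : HasDerivAt (fun s : ℝ => -lam * (t - s)) lam s := by
      have := ((hasDerivAt_const s t).sub (hasDerivAt_id s)).const_mul (-lam)
      simpa using this
    have h2 := h1.exp
    have h3 := h2.div_const lam
    simpa [mul_div_cancel_right₀ _ hlam] using h3
  rw [intervalIntegral.integral_eq_sub_of_hasDerivAt hd
    ((Real.continuous_exp.comp (by continuity)).intervalIntegrable 0 t)]
  simp
  ring

lemma inner_bound_aux {M N : ℕ} (lam : Fin M → ℝ) (lammin : ℝ)
    (hlam : ∀ k, lammin ≤ lam k)
    (ω : Fin M → ℝ) (μ : Fin N → ℝ) (hμ : ∀ i, μ i < 0)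
    (A : Matrix (Fin M × Fin N) (Fin M × Fin N) ℝ)
    (hA : A = -(Matrix.diagonal lam ⊗ₖ (1 : Matrix (Fin N) (Fin N) ℝ)) +
      vecMulVec (fun i => Real.sqrt (ω i)) (fun i => Real.sqrt (ω i)) ⊗ₖ Matrix.diagonal μ)
    (x : EuclideanSpace ℝ (Fin M × Fin N)) :
    ⟪(toEuclideanCLM (𝕜 := ℝ) A) x, x⟫ ≤ -lammin * ‖x‖ ^ 2 := by
  have hentry : ∀ p, (toEuclideanCLM (𝕜 := ℝ) A) x p
      = A.mulVec (fun q => x q) p := by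
    intro p
    have := ofLp_toEuclideanCLM (𝕜 := ℝ) A x
    have h2 := congrFun (congrArg (fun y => (y : (Fin M × Fin N) → ℝ)) this) p
    simpa [Matrix.toLin'_apply] using h2
  rw [PiLp.inner_apply]
  simp only [RCLike.inner_apply, starRingEnd_apply, star_trivial]
  have hsum : ∑ p, (toEuclideanCLM (𝕜 := ℝ) A) x p * x p
      = (∑ p : Fin M × Fin N, -(lam p.1 * (x p) ^ 2)) +
        ∑ j, μ j * (∑ i, Real.sqrt (ω i) * x (i, j)) ^ 2 := by
    calc ∑ p, (toEuclideanCLM (𝕜 := ℝ) A) x p * x p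
        = ∑ p : Fin M × Fin N, (-(lam p.1 * x p) +
            Real.sqrt (ω p.1) * μ p.2 * ∑ k, Real.sqrt (ω k) * x (k, p.2)) * x p := by
          refine Finset.sum_congr rfl fun p _ => ?_
          rw [hentry p, mulVec_A_eq' lam ω μ A hA]
      _ = (∑ p : Fin M × Fin N, -(lam p.1 * (x p) ^ 2)) +
          ∑ p : Fin M × Fin N, Real.sqrt (ω p.1) * μ p.2 *
            (∑ k, Real.sqrt (ω k) * x (k, p.2)) * x p := by
          rw [← Finset.sum_add_distrib]
          refine Finset.sum_congr rfl fun p _ => ?_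
          ring
      _ = (∑ p : Fin M × Fin N, -(lam p.1 * (x p) ^ 2)) +
          ∑ j, μ j * (∑ i, Real.sqrt (ω i) * x (i, j)) ^ 2 := by
          congr 1
          rw [Fintype.sum_prod_type_right]
          refine Finset.sum_congr rfl fun j _ => ?_
          have hc : ∀ i : Fin M,
              (Real.sqrt (ω (i, j).1) * μ (i, j).2 * ∑ k, Real.sqrt (ω k) * x (k, (i, j).2))
                  * x (i, j)
                = μ j * ((∑ k, Real.sqrt (ω k) * x (k, j)) * (Real.sqrt (ω i) * x (i, j))) :=
            fun i => by ring
          rw [Finset.sum_congr rfl fun i _ => hc i, ← Finset.mul_sum, ← Finset.mul_sum, pow_two]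
  rw [Finset.sum_congr rfl fun p _ => mul_comm (x p) _]
  rw [hsum]
  have h2 : ∑ j, μ j * (∑ i, Real.sqrt (ω i) * x (i, j)) ^ 2 ≤ 0 := by
    apply Finset.sum_nonpos
    intro j _
    exact mul_nonpos_of_nonpos_of_nonneg (hμ j).le (sq_nonneg _)
  have h1 : (∑ p : Fin M × Fin N, -(lam p.1 * (x p) ^ 2)) ≤ -lammin * ‖x‖ ^ 2 := by
    have hn : ‖x‖ ^ 2 = ∑ p, (x p) ^ 2 := by
      rw [EuclideanSpace.norm_eq, Real.sq_sqrt (by positivity)]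
      simp [sq_abs]
    rw [hn, Finset.mul_sum]
    apply Finset.sum_le_sum
    intro p _
    have := sq_nonneg (x p)
    nlinarith [hlam p.1]
  linarith


/-- Let `Λ = diag(λ)` with all `λ_k ≥ λ_min > 0`, `ω` with positive entries,
`E_ω = ω^{1/2}(ω^{1/2})ᵀ`, `D_∞ = diag(μ)` with all `μ_i < 0`, and
`A = −Λ⊗I + E_ω⊗D_∞`. For `g ∈ ℝ^N` let `U(t) = ∫_0^t exp((t−s)A)(ω^{1/2} ⊗ g) ds`. Then
`‖U(t)‖ ≤ (Σω)^{1/2} ‖g‖ (1 − e^{−λ_min t})/λ_min ≤ (Σω)^{1/2} ‖g‖ / λ_min` for `t ≥ 0`,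
with Euclidean norms. -/
theorem stmt_19 {M N : ℕ} (lam : Fin M → ℝ) (lammin : ℝ) (hmin : 0 < lammin)
    (hlam : ∀ k, lammin ≤ lam k)
    (ω : Fin M → ℝ) (hω : ∀ i, 0 < ω i)
    (μ : Fin N → ℝ) (hμ : ∀ i, μ i < 0)
    (A : Matrix (Fin M × Fin N) (Fin M × Fin N) ℝ)
    (hA : A = -(Matrix.diagonal lam ⊗ₖ (1 : Matrix (Fin N) (Fin N) ℝ)) +
      vecMulVec (fun i => Real.sqrt (ω i)) (fun i => Real.sqrt (ω i)) ⊗ₖ Matrix.diagonal μ)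
    (g : Fin N → ℝ)
    (U : ℝ → Fin M × Fin N → ℝ)
    (hU : ∀ t : ℝ, U t = ∫ s in (0 : ℝ)..t,
      (NormedSpace.exp ((t - s) • A)).mulVec
        (fun p : Fin M × Fin N => Real.sqrt (ω p.1) * g p.2)) :
    ∀ t : ℝ, 0 ≤ t →
      Real.sqrt (∑ p, U t p ^ 2) ≤
        Real.sqrt (∑ i, ω i) * Real.sqrt (∑ j, g j ^ 2) *
          ((1 - Real.exp (-lammin * t)) / lammin) ∧
      Real.sqrt (∑ i, ω i) * Real.sqrt (∑ j, g j ^ 2) *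
          ((1 - Real.exp (-lammin * t)) / lammin) ≤
        Real.sqrt (∑ i, ω i) * Real.sqrt (∑ j, g j ^ 2) / lammin := by
  intro t ht
  have hωsum : (0:ℝ) ≤ ∑ i, ω i := Finset.sum_nonneg fun i _ => (hω i).le
  set a := Real.sqrt (∑ i, ω i) * Real.sqrt (∑ j, g j ^ 2) with ha
  have ha0 : 0 ≤ a := by positivity
  have hsecond : a * ((1 - Real.exp (-lammin * t)) / lammin) ≤ a / lammin := by
    rw [← mul_div_assoc]
    apply (div_le_div_iff_of_pos_right hmin).mpr
    nlinarith [Real.exp_nonneg (-lammin * t)]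
  refine ⟨?_, hsecond⟩
  classical
  set L : EuclideanSpace ℝ (Fin M × Fin N) →L[ℝ] EuclideanSpace ℝ (Fin M × Fin N) :=
    toEuclideanCLM (𝕜 := ℝ) A with hLdef
  set v₀ : Fin M × Fin N → ℝ := fun p => Real.sqrt (ω p.1) * g p.2 with hv₀
  set v : EuclideanSpace ℝ (Fin M × Fin N) := (WithLp.equiv 2 _).symm v₀ with hv
  have hL : ∀ x : EuclideanSpace ℝ (Fin M × Fin N), ⟪L x, x⟫ ≤ -lammin * ‖x‖ ^ 2 :=
    fun x => inner_bound_aux lam lammin hlam ω μ hμ A hA x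
  have hdecay := exp_decay_aux' L lammin hL v
  letI : SeminormedRing (Matrix (Fin M × Fin N) (Fin M × Fin N) ℝ) :=
    Matrix.linftyOpSemiNormedRing
  letI : NormedRing (Matrix (Fin M × Fin N) (Fin M × Fin N) ℝ) := Matrix.linftyOpNormedRing
  letI : NormedAlgebra ℝ (Matrix (Fin M × Fin N) (Fin M × Fin N) ℝ) :=
    Matrix.linftyOpNormedAlgebra
  have hcont : Continuous (⇑(toEuclideanCLM (n := Fin M × Fin N) (𝕜 := ℝ))) := by
    exact LinearMap.continuous_of_finiteDimensional
      { toFun := ⇑(toEuclideanCLM (n := Fin M × Fin N) (𝕜 := ℝ)),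
        map_add' := fun x y => map_add _ x y,
        map_smul' := fun c x => map_smul (toEuclideanCLM (n := Fin M × Fin N) (𝕜 := ℝ)) c x }
  have hexp_map : ∀ B : Matrix (Fin M × Fin N) (Fin M × Fin N) ℝ,
      toEuclideanCLM (𝕜 := ℝ) (exp B) = exp (toEuclideanCLM (𝕜 := ℝ) B) :=
    fun B => map_exp_of_mem_ball (𝕂 := ℝ) _ hcont B
      ((expSeries_radius_eq_top ℝ (Matrix (Fin M × Fin N) (Fin M × Fin N) ℝ)).symm ▸ edist_lt_top _ _)
  have hfun : ∀ s : ℝ, (WithLp.equiv 2 _).symm ((exp ((t - s) • A)).mulVec v₀)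
      = exp ((t - s) • L) v := by
    intro s
    rw [hv, WithLp.equiv_symm_apply, ← toEuclideanCLM_toLp, hexp_map,
      _root_.map_smul, hLdef]
  have hcontG : Continuous (fun s : ℝ => exp ((t - s) • L) v) := by
    apply Continuous.clm_apply ?_ continuous_const
    exact (show Continuous (exp : (EuclideanSpace ℝ (Fin M × Fin N) →L[ℝ] EuclideanSpace ℝ (Fin M × Fin N)) → _) by
        rw [← continuousOn_univ, ← Metric.eball_top_eq_univ (0 : EuclideanSpace ℝ (Fin M × Fin N) →L[ℝ] EuclideanSpace ℝ (Fin M × Fin N)),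
          ← expSeries_radius_eq_top ℝ (EuclideanSpace ℝ (Fin M × Fin N) →L[ℝ] EuclideanSpace ℝ (Fin M × Fin N))]
        exact continuousOn_exp (𝕂 := ℝ)).comp ((continuous_const.sub continuous_id).smul continuous_const)
  set φ : (Fin M × Fin N → ℝ) ≃L[ℝ] EuclideanSpace ℝ (Fin M × Fin N) :=
    (PiLp.continuousLinearEquiv 2 ℝ (fun _ : Fin M × Fin N => ℝ)).symm with hφ
  have hint : IntervalIntegrable
      (fun s => (exp ((t - s) • A)).mulVec v₀) MeasureTheory.volume 0 t := by
    have heq : (fun s => (exp ((t - s) • A)).mulVec v₀)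
        = fun s => φ.symm (exp ((t - s) • L) v) := by
      funext s; rw [← hfun s]; rfl
    rw [heq]
    exact (φ.symm.continuous.comp hcontG).intervalIntegrable 0 t
  have hUe : φ (U t) = ∫ s in (0:ℝ)..t, exp ((t - s) • L) v := by
    rw [hU t, ← ContinuousLinearEquiv.coe_coe φ,
      ← (φ : (Fin M × Fin N → ℝ) →L[ℝ] EuclideanSpace ℝ (Fin M × Fin N)).intervalIntegral_comp_comm
        hint]
    refine intervalIntegral.integral_congr fun s _ => ?_
    exact hfun s
  have hnormU : Real.sqrt (∑ p, U t p ^ 2) = ‖φ (U t)‖ := by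
    rw [EuclideanSpace.norm_eq]
    congr 1
    refine Finset.sum_congr rfl fun p _ => ?_
    show U t p ^ 2 = ‖U t p‖ ^ 2
    rw [Real.norm_eq_abs, sq_abs]
  have hvnorm : ‖v‖ = a := by
    rw [EuclideanSpace.norm_eq]
    have h1 : ∑ p : Fin M × Fin N, ‖v p‖ ^ 2 = (∑ i, ω i) * (∑ j, g j ^ 2) := by
      have h2 : ∀ p : Fin M × Fin N, ‖v p‖ ^ 2 = ω p.1 * g p.2 ^ 2 := by
        intro p
        have : v p = Real.sqrt (ω p.1) * g p.2 := rfl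
        rw [this]
        rw [Real.norm_eq_abs, sq_abs, mul_pow, Real.sq_sqrt (hω p.1).le]
      rw [Finset.sum_congr rfl fun p _ => h2 p]
      rw [Finset.sum_mul_sum]
      rw [Fintype.sum_prod_type]
    rw [h1, ha, Real.sqrt_mul hωsum]
  calc Real.sqrt (∑ p, U t p ^ 2) = ‖φ (U t)‖ := hnormU
    _ = ‖∫ s in (0:ℝ)..t, exp ((t - s) • L) v‖ := by rw [hUe]
    _ ≤ ∫ s in (0:ℝ)..t, ‖exp ((t - s) • L) v‖ :=
        intervalIntegral.norm_integral_le_integral_norm ht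
    _ ≤ ∫ s in (0:ℝ)..t, Real.exp (-lammin * (t - s)) * ‖v‖ := by
        apply intervalIntegral.integral_mono_on ht
        · exact hcontG.norm.intervalIntegrable 0 t
        · have hc : Continuous fun s : ℝ => -lammin * (t - s) :=
            continuous_const.mul (continuous_const.sub continuous_id)
          exact ((Real.continuous_exp.comp hc).mul continuous_const).intervalIntegrable 0 t
        · intro s hs
          exact hdecay (t - s) (by linarith [hs.2])
    _ = (∫ s in (0:ℝ)..t, Real.exp (-lammin * (t - s))) * ‖v‖ :=
        intervalIntegral.integral_mul_const _ _
    _ = a * ((1 - Real.exp (-lammin * t)) / lammin) := by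
        rw [integral_exp_aux lammin t hmin.ne', hvnorm]; ring
end
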